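/- In the formal power series completion of U_h(sl₂) (or as an identity of all coefficients of divided-power monomials), the product e^y ⋆ e^x of the exponentials of y and x equals e^{x·e^{2h}} · e^y; equivalently, for all a, b, c ∈ ℕ the coefficient of (x^a/a!)(y^b/b!)(h^c/c!) in the normally-ordered expansion of e^y e^x is (2a)^c, i.e. (y^B/B!)(x^a/a!) summed appropriately gives ∑_{a,b,c} (2a)^c (x^a/a!)(y^b/b!)(h^c/c!). -/

import Mathlib

/-!
Since `h` is central, the relation `yx = xy + 2xh` reads `y x = x (y + 2h)`, so conjugating past
`x^a` shifts `y` to `y + 2ah` and `y^b x^a = x^a (y + 2ah)^b`. As `y` and `2ah` commute, the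
binomial theorem in divided powers expands `(y + 2ah)^b / b!` as
`∑_c (2a)^c (y^(b-c)/(b-c)!) (h^c/c!)`.
-/

namespace UhSl2

/-- Generators of `U_h(sl₂)`. -/
inductive Gen : Type | x | y | z | h

variable (K : Type*) [Field K]

open FreeAlgebra in
/-- Defining relations of `U_h(sl₂)`: `h` is central, `yx = xy + 2xh`,
`zx = xz - yh`, `zy = yz + 2zh`. -/
inductive Rel : FreeAlgebra K Gen → FreeAlgebra K Gen → Prop
  | yx : Rel (ι K Gen.y * ι K Gen.x) (ι K Gen.x * ι K Gen.y + 2 * (ι K Gen.x * ι K Gen.h))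
  | zx : Rel (ι K Gen.z * ι K Gen.x) (ι K Gen.x * ι K Gen.z - ι K Gen.y * ι K Gen.h)
  | zy : Rel (ι K Gen.z * ι K Gen.y) (ι K Gen.y * ι K Gen.z + 2 * (ι K Gen.z * ι K Gen.h))
  | hx : Rel (ι K Gen.h * ι K Gen.x) (ι K Gen.x * ι K Gen.h)
  | hy : Rel (ι K Gen.h * ι K Gen.y) (ι K Gen.y * ι K Gen.h)
  | hz : Rel (ι K Gen.h * ι K Gen.z) (ι K Gen.z * ι K Gen.h)

/-- The homogeneous universal enveloping algebra `U_h(sl₂)`. -/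
abbrev Uh := RingQuot (Rel K)

noncomputable def X : Uh K := RingQuot.mkAlgHom K (Rel K) (FreeAlgebra.ι K Gen.x)
noncomputable def Y : Uh K := RingQuot.mkAlgHom K (Rel K) (FreeAlgebra.ι K Gen.y)
noncomputable def Z : Uh K := RingQuot.mkAlgHom K (Rel K) (FreeAlgebra.ι K Gen.z)
noncomputable def H : Uh K := RingQuot.mkAlgHom K (Rel K) (FreeAlgebra.ι K Gen.h)

/-- Divided power `u^n / n!`. -/
noncomputable def dp (n : ℕ) (u : Uh K) : Uh K := (n.factorial : K)⁻¹ • u ^ n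

end UhSl2

open Finset Nat

theorem semiconjBy_pow_of_mul_eq_mul_add {R : Type*} [Semiring R] {x y d : R}
    (hyx : y * x = x * (y + d)) (hxd : Commute x d) (n : ℕ) :
    SemiconjBy (x ^ n) (y + n • d) y := by
  induction n with
  | zero => simp [SemiconjBy]
  | succ n ih =>
    calc x ^ (n + 1) * (y + (n + 1) • d)
        = x ^ n * (x * (y + d) + x * n • d) := by
          rw [pow_succ, mul_assoc, succ_nsmul]; noncomm_ring
      _ = x ^ n * (y + n • d) * x := by rw [← hyx, (hxd.smul_right n).eq]; noncomm_ring
      _ = y * x ^ (n + 1) := by rw [ih.eq, mul_assoc, pow_succ]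

theorem Commute.inv_factorial_smul_add_pow {K A : Type*} [Field K] [CharZero K] [Semiring A]
    [Algebra K A] {u v : A} (h : Commute u v) (n : ℕ) :
    (n ! : K)⁻¹ • (u + v) ^ n =
      ∑ i ∈ antidiagonal n, ((i.1 ! : K)⁻¹ • u ^ i.1) * ((i.2 ! : K)⁻¹ • v ^ i.2) := by
  rw [h.add_pow', smul_sum]
  refine sum_congr rfl fun i hi => ?_
  obtain rfl := Finset.HasAntidiagonal.mem_antidiagonal.mp hi
  rw [smul_mul_smul_comm, ← Nat.cast_smul_eq_nsmul K, smul_smul, Nat.cast_add_choose]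
  congr 1
  rw [div_eq_mul_inv, inv_mul_cancel_left₀ (Nat.cast_ne_zero.mpr (factorial_ne_zero _)), mul_inv]

namespace UhSl2

variable (K : Type*) [Field K]

theorem commute_X_H : Commute (X K) (H K) :=
  (by simpa [X, H] using RingQuot.mkAlgHom_rel K (Rel.hx (K := K)) : H K * X K = X K * H K).symm

theorem commute_Y_H : Commute (Y K) (H K) :=
  (by simpa [Y, H] using RingQuot.mkAlgHom_rel K (Rel.hy (K := K)) : H K * Y K = Y K * H K).symm

theorem Y_mul_X : Y K * X K = X K * (Y K + (2 : K) • H K) := by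
  have hyx : Y K * X K = X K * Y K + 2 * (X K * H K) := by
    simpa [X, Y, H, map_ofNat] using RingQuot.mkAlgHom_rel K (Rel.yx (K := K))
  rw [hyx, two_mul, two_smul, mul_add, mul_add]

theorem dp_smul (c : K) (n : ℕ) (u : Uh K) : dp K n (c • u) = c ^ n • dp K n u := by
  rw [dp, dp, smul_pow, smul_comm]

theorem dp_Y_mul_dp_X (a b : ℕ) :
    dp K b (Y K) * dp K a (X K) = dp K a (X K) * dp K b (Y K + (2 * a : K) • H K) := by
  have hd : a • (2 : K) • H K = (2 * a : K) • H K := by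
    rw [← Nat.cast_smul_eq_nsmul K, smul_smul, mul_comm]
  have hsemi := semiconjBy_pow_of_mul_eq_mul_add (Y_mul_X K) ((commute_X_H K).smul_right _) a
  rw [hd] at hsemi
  rw [dp, dp, dp, smul_mul_smul_comm, smul_mul_smul_comm, (hsemi.pow_right b).eq,
    mul_comm (b ! : K)⁻¹]

variable [CharZero K]

theorem dp_add {u v : Uh K} (h : Commute u v) (n : ℕ) :
    dp K n (u + v) = ∑ p ∈ antidiagonal n, dp K p.1 u * dp K p.2 v :=
  h.inv_factorial_smul_add_pow n

end UhSl2

open UhSl2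

/-- Coefficient form of `e^y ⋆ e^x = e^{x e^{2h}} e^y` in the formal completion of
`U_h(sl₂)`: the term `(y^b/b!)(x^a/a!)` of `e^y ⋆ e^x` expands in normal order with
coefficient `(2a)^c` on each divided-power monomial `(x^a/a!)(y^{b-c}/(b-c)!)(h^c/c!)`,
which is exactly the coefficient family of `e^{x e^{2h}} e^y`. -/
theorem exp_y_star_exp_x (K : Type*) [Field K] [CharZero K] (a b : ℕ) :
    dp K b (Y K) * dp K a (X K) =
      ∑ c ∈ Finset.range (b + 1),
        ((2 * (a : K)) ^ c) • (dp K a (X K) * dp K (b - c) (Y K) * dp K c (H K)) := by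
  rw [dp_Y_mul_dp_X, dp_add K ((commute_Y_H K).smul_right _), mul_sum, ← sum_antidiagonal_swap]
  simp only [Prod.fst_swap, Prod.snd_swap]
  rw [Nat.sum_antidiagonal_eq_sum_range_succ
    (fun i j => dp K a (X K) * (dp K j (Y K) * dp K i ((2 * a : K) • H K)))]
  refine sum_congr rfl fun c _ => ?_
  rw [dp_smul, mul_smul_comm, mul_smul_comm, mul_assoc]
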